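/- Setting v = 1: the ruin probability matrix of the dual risk process is G^u, i.e., P(τ̂_0 < ∞, J_{τ̂_0} = j | J_0 = i, Û_0 = u) = (G^u)_{ij}, where G = G_1 is the one-step transition matrix of the phase chain observed at successive new maxima of the associated spectrally negative MAC; hence ψ̂(u) = α^T G^u e. -/

import Mathlib

open scoped Classical Matrix

/-- Probability of a finite trajectory of increment/phase pairs of a Markov additive chain
with increment matrices `A`, started in phase `i`. -/
noncomputable def pathProb {N : ℕ} (A : ℤ → Matrix (Fin N) (Fin N) ℝ) :
    Fin N → List (ℤ × Fin N) → ℝ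
  | _, [] => 1
  | i, (m, j) :: rest => A m i j * pathProb A j rest

/-- The phase at the end of a trajectory started in phase `i`. -/
noncomputable def endPhase {N : ℕ} (i : Fin N) (l : List (ℤ × Fin N)) : Fin N :=
  l.foldl (fun _ p => p.2) i

/-- The level of the chain after `k` steps of the trajectory `l`, started at level `x`. -/
noncomputable def lev {N : ℕ} (x : ℤ) (l : List (ℤ × Fin N)) (k : ℕ) : ℤ :=
  x + ((l.take k).map Prod.fst).sum

/-- `passMat A v x a` is the matrix `E_x(v^{τ_a^+}; J_{τ_a^+})`: its `(i,j)` entry is the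
`v`-discounted transform of the first passage time above level `a` started at level `x` in
phase `i`, restricted to `{J_{τ_a^+} = j, τ_a^+ < ∞}`. -/
noncomputable def passMat {N : ℕ} (A : ℤ → Matrix (Fin N) (Fin N) ℝ) (v : ℝ) (x a : ℤ) :
    Matrix (Fin N) (Fin N) ℝ :=
  Matrix.of fun i j => ∑' l : List (ℤ × Fin N),
    if (∀ k < l.length, lev x l k < a) ∧ a ≤ lev x l l.length ∧ endPhase i l = j
    then v ^ l.length * pathProb A i l else 0

/-- `occMat A v x` is the occupation matrix `L_v(x,∞)`: its `(i,j)` entry is the expected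
`v`-discounted time spent at level `x` in phase `j`, started at level `0` in phase `i`. -/
noncomputable def occMat {N : ℕ} (A : ℤ → Matrix (Fin N) (Fin N) ℝ) (v : ℝ) (x : ℤ) :
    Matrix (Fin N) (Fin N) ℝ :=
  Matrix.of fun i j => ∑' l : List (ℤ × Fin N),
    if lev 0 l l.length = x ∧ endPhase i l = j then v ^ l.length * pathProb A i l else 0

/-- `hitMat A v y` is `E(v^{τ^{{y}}}; J_{τ^{{y}}})`, the transform matrix of the first hitting
time of level `y` started at level `0`. -/
noncomputable def hitMat {N : ℕ} (A : ℤ → Matrix (Fin N) (Fin N) ℝ) (v : ℝ) (y : ℤ) :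
    Matrix (Fin N) (Fin N) ℝ :=
  Matrix.of fun i j => ∑' l : List (ℤ × Fin N),
    if (∀ k < l.length, lev 0 l k ≠ y) ∧ lev 0 l l.length = y ∧ endPhase i l = j
    then v ^ l.length * pathProb A i l else 0

/-- `LplusMat A v n` is `L_v^+(n) = L_v(0, τ_n^+ - 1)`: the expected `v`-discounted occupation
time of level `0` strictly before first passage to the upper level `n`, started at `0`. -/
noncomputable def LplusMat {N : ℕ} (A : ℤ → Matrix (Fin N) (Fin N) ℝ) (v : ℝ) (n : ℕ) :
    Matrix (Fin N) (Fin N) ℝ :=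
  Matrix.of fun i j => ∑' l : List (ℤ × Fin N),
    if lev 0 l l.length = 0 ∧ endPhase i l = j ∧ (∀ k ≤ l.length, lev 0 l k < n)
    then v ^ l.length * pathProb A i l else 0

/-- The discrete `W_v` scale matrix: `W_v(n) = G_v^{-n} L_v^+(n)` for `n > 0` and `W_v(n) = 0`
for `n ≤ 0`. -/
noncomputable def Wmat {N : ℕ} (A : ℤ → Matrix (Fin N) (Fin N) ℝ) (v : ℝ) (n : ℤ) :
    Matrix (Fin N) (Fin N) ℝ :=
  if n ≤ 0 then 0 else (passMat A v 0 1)⁻¹ ^ n.toNat * LplusMat A v n.toNat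

/-- The probability generating matrix `F(z) = Σ_{m=-1}^∞ z^m A_{-m}` of the chain. -/
noncomputable def Fmat {N : ℕ} (A : ℤ → Matrix (Fin N) (Fin N) ℝ) (z : ℝ) :
    Matrix (Fin N) (Fin N) ℝ :=
  ∑' m : ℤ, z ^ m • A (-m)

/-- `Rmat A v = L_v^{-1} G_v L_v`, the left solution of `F(·) = v⁻¹ I`. -/
noncomputable def Rmat {N : ℕ} (A : ℤ → Matrix (Fin N) (Fin N) ℝ) (v : ℝ) :
    Matrix (Fin N) (Fin N) ℝ :=
  (occMat A v 0)⁻¹ * passMat A v 0 1 * occMat A v 0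
/-- Probability of a finite trajectory of claim-size/phase pairs of the Markov-modulated risk
model with claim mass matrices `Λ`, started in phase `i`. -/
noncomputable def claimProb {N : ℕ} (Λ : ℕ → Matrix (Fin N) (Fin N) ℝ) :
    Fin N → List (ℕ × Fin N) → ℝ
  | _, [] => 1
  | i, (m, j) :: rest => Λ m i j * claimProb Λ j rest

/-- The phase at the end of a claim trajectory started in phase `i`. -/
noncomputable def cEndPhase {N : ℕ} (i : Fin N) (l : List (ℕ × Fin N)) : Fin N :=
  l.foldl (fun _ p => p.2) i

/-- The surplus `U_k = u + k - Σ_{i≤k} Z_i` of the risk process after `k` periods along the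
claim trajectory `l`, with initial reserve `u`. -/
noncomputable def ulev {N : ℕ} (u : ℤ) (l : List (ℕ × Fin N)) (k : ℕ) : ℤ :=
  u + k - ((l.take k).map fun p => (p.1 : ℤ)).sum

/-- The increment matrices of the MAC associated with the risk process: `A_m = Λ(1-m)` for
`m ≤ 1` and `A_m = 0` for `m ≥ 2`. -/
noncomputable def Amat {N : ℕ} (Λ : ℕ → Matrix (Fin N) (Fin N) ℝ) :
    ℤ → Matrix (Fin N) (Fin N) ℝ :=
  fun m => if m ≤ 1 then Λ (1 - m).toNat else 0

/-- The surplus of the dual risk process `Û_k = u - k + Σ_{i≤k} Z_i` after `k` periods. -/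
noncomputable def dlev {N : ℕ} (u : ℤ) (l : List (ℕ × Fin N)) (k : ℕ) : ℤ :=
  u - k + ((l.take k).map fun p => (p.1 : ℤ)).sum

/-- The ruin probability matrix of the dual risk process: `(i,j)` entry
`P(τ̂_0 < ∞, J_{τ̂_0} = j | J_0 = i, Û_0 = u)`. -/
noncomputable def dualRuin {N : ℕ} (Λ : ℕ → Matrix (Fin N) (Fin N) ℝ) (u : ℤ) :
    Matrix (Fin N) (Fin N) ℝ :=
  Matrix.of fun i j => ∑' l : List (ℕ × Fin N),
    if (∀ k < l.length, 0 < dlev u l k) ∧ dlev u l l.length ≤ 0 ∧ cEndPhase i l = j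
    then claimProb Λ i l else 0

/-! ### Auxiliary development -/

section Aux

open Function
open scoped ENNReal

variable {N : ℕ}

/-- ENNReal-valued path probability over `ℤ`-increment lists. -/
noncomputable def ep (A : ℤ → Matrix (Fin N) (Fin N) ℝ) :
    Fin N → List (ℤ × Fin N) → ℝ≥0∞
  | _, [] => 1
  | i, (m, j) :: rest => ENNReal.ofReal (A m i j) * ep A j rest

/-- ENNReal-valued path probability over `ℕ`-claim lists. -/
noncomputable def ec (Λ : ℕ → Matrix (Fin N) (Fin N) ℝ) :
    Fin N → List (ℕ × Fin N) → ℝ≥0∞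
  | _, [] => 1
  | i, (m, j) :: rest => ENNReal.ofReal (Λ m i j) * ec Λ j rest

/-- The first-passage condition over level `a`. -/
def fpCond (a : ℤ) (l : List (ℤ × Fin N)) : Prop :=
  (∀ k < l.length, lev 0 l k < a) ∧ a ≤ lev (0 : ℤ) l l.length

/-- ENNReal-valued first passage matrix entries. -/
noncomputable def fp (A : ℤ → Matrix (Fin N) (Fin N) ℝ) (a : ℤ) (i j : Fin N) : ℝ≥0∞ :=
  ∑' l : List (ℤ × Fin N), if fpCond a l ∧ endPhase i l = j then ep A i l else 0

@[simp] lemma endPhase_nil (i : Fin N) : endPhase i ([] : List (ℤ × Fin N)) = i := rfl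

@[simp] lemma endPhase_cons (i : Fin N) (p : ℤ × Fin N) (l : List (ℤ × Fin N)) :
    endPhase i (p :: l) = endPhase p.2 l := rfl

lemma endPhase_append (i : Fin N) (l₁ l₂ : List (ℤ × Fin N)) :
    endPhase i (l₁ ++ l₂) = endPhase (endPhase i l₁) l₂ := by
  simp [endPhase, List.foldl_append]

@[simp] lemma cEndPhase_nil (i : Fin N) : cEndPhase i ([] : List (ℕ × Fin N)) = i := rfl

@[simp] lemma lev_zero (x : ℤ) (l : List (ℤ × Fin N)) : lev x l 0 = x := by simp [lev]

@[simp] lemma lev_nil (x : ℤ) (k : ℕ) : lev x ([] : List (ℤ × Fin N)) k = x := by simp [lev]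

lemma lev_eq (x : ℤ) (l : List (ℤ × Fin N)) (k : ℕ) : lev x l k = x + lev 0 l k := by
  simp [lev]

lemma lev_cons_succ (x m : ℤ) (j : Fin N) (l : List (ℤ × Fin N)) (k : ℕ) :
    lev x ((m, j) :: l) (k + 1) = x + m + lev 0 l k := by
  simp [lev]; ring

lemma lev_succ (x : ℤ) {l : List (ℤ × Fin N)} {k : ℕ} (hk : k < l.length) :
    lev x l (k + 1) = lev x l k + (l.get ⟨k, hk⟩).1 := by
  simp only [lev, List.take_succ, List.getElem?_eq_getElem hk, Option.toList_some,
    List.map_append, List.sum_append, List.map_cons, List.map_nil, List.sum_cons,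
    List.sum_nil, List.get_eq_getElem]
  ring

lemma lev_append_le (x : ℤ) {l₁ l₂ : List (ℤ × Fin N)} {k : ℕ} (h : k ≤ l₁.length) :
    lev x (l₁ ++ l₂) k = lev x l₁ k := by
  simp [lev, List.take_append_of_le_length h]

lemma lev_append_add (x : ℤ) (l₁ l₂ : List (ℤ × Fin N)) (k : ℕ) :
    lev x (l₁ ++ l₂) (l₁.length + k) = lev (lev x l₁ l₁.length) l₂ k := by
  simp [lev, List.take_append, List.take_of_length_le]; ring

lemma lev_take (x : ℤ) (l : List (ℤ × Fin N)) {k T : ℕ} (h : k ≤ T) :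
    lev x (l.take T) k = lev x l k := by
  simp [lev, List.take_take, Nat.min_eq_left h]

lemma ep_ne_top (A : ℤ → Matrix (Fin N) (Fin N) ℝ) (i : Fin N) (l : List (ℤ × Fin N)) :
    ep A i l ≠ ∞ := by
  induction l generalizing i with
  | nil => simp [ep]
  | cons p rest ih =>
    obtain ⟨m, j⟩ := p
    exact ENNReal.mul_ne_top ENNReal.ofReal_ne_top (ih j)

lemma ec_ne_top (Λ : ℕ → Matrix (Fin N) (Fin N) ℝ) (i : Fin N) (l : List (ℕ × Fin N)) :
    ec Λ i l ≠ ∞ := by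
  induction l generalizing i with
  | nil => simp [ec]
  | cons p rest ih =>
    obtain ⟨m, j⟩ := p
    exact ENNReal.mul_ne_top ENNReal.ofReal_ne_top (ih j)

lemma ep_toReal {A : ℤ → Matrix (Fin N) (Fin N) ℝ} (hnn : ∀ m i j, 0 ≤ A m i j)
    (i : Fin N) (l : List (ℤ × Fin N)) : (ep A i l).toReal = pathProb A i l := by
  induction l generalizing i with
  | nil => simp [ep, pathProb]
  | cons p rest ih =>
    obtain ⟨m, j⟩ := p
    simp [ep, pathProb, ENNReal.toReal_mul, ENNReal.toReal_ofReal (hnn m i j), ih]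

lemma ec_toReal {Λ : ℕ → Matrix (Fin N) (Fin N) ℝ} (hnn : ∀ m i j, 0 ≤ Λ m i j)
    (i : Fin N) (l : List (ℕ × Fin N)) : (ec Λ i l).toReal = claimProb Λ i l := by
  induction l generalizing i with
  | nil => simp [ec, claimProb]
  | cons p rest ih =>
    obtain ⟨m, j⟩ := p
    simp [ec, claimProb, ENNReal.toReal_mul, ENNReal.toReal_ofReal (hnn m i j), ih]

lemma ep_append (A : ℤ → Matrix (Fin N) (Fin N) ℝ) (i : Fin N)
    (l₁ l₂ : List (ℤ × Fin N)) :
    ep A i (l₁ ++ l₂) = ep A i l₁ * ep A (endPhase i l₁) l₂ := by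
  induction l₁ generalizing i with
  | nil => simp [ep]
  | cons p rest ih =>
    obtain ⟨m, j⟩ := p
    simp [ep, ih j, mul_assoc]

lemma ep_step_le {A : ℤ → Matrix (Fin N) (Fin N) ℝ} (hskip : ∀ m : ℤ, 1 < m → A m = 0)
    {i : Fin N} {l : List (ℤ × Fin N)} (h : ep A i l ≠ 0) : ∀ p ∈ l, p.1 ≤ 1 := by
  induction l generalizing i with
  | nil => simp
  | cons p rest ih =>
    obtain ⟨m, j⟩ := p
    rw [ep] at h
    rcases mul_ne_zero_iff.mp h with ⟨h1, h2⟩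
    intro q hq
    rcases List.mem_cons.mp hq with rfl | hq
    · by_contra hm
      push_neg at hm
      simp [hskip m hm] at h1
    · exact ih h2 q hq

lemma lev_step_le {l : List (ℤ × Fin N)} (h : ∀ p ∈ l, p.1 ≤ 1) {k : ℕ}
    (hk : k < l.length) : lev 0 l (k + 1) ≤ lev 0 l k + 1 := by
  rw [lev_succ 0 hk]
  exact add_le_add_right (h _ (l.get_mem _)) _

lemma fpCond_exact {l : List (ℤ × Fin N)} {a : ℤ} (ha : 1 ≤ a)
    (hstep : ∀ p ∈ l, p.1 ≤ 1) (h : fpCond a l) : lev 0 l l.length = a := by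
  have hne : l ≠ [] := by
    rintro rfl
    have h2 := h.2
    rw [List.length_nil, lev_nil] at h2
    omega
  obtain ⟨n, hn⟩ : ∃ n, l.length = n + 1 :=
    Nat.exists_eq_succ_of_ne_zero (fun h => hne (List.length_eq_zero_iff.mp h))
  have h1 : lev 0 l n < a := h.1 n (by omega)
  have h2 : lev 0 l (n + 1) ≤ lev 0 l n + 1 := lev_step_le hstep (by omega)
  have h3 := h.2
  rw [hn] at h3 ⊢
  omega

lemma fpCond_cons {a m : ℤ} {j : Fin N} {t : List (ℤ × Fin N)} :
    fpCond a ((m, j) :: t) ↔ 0 < a ∧ fpCond (a - m) t := by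
  constructor
  · rintro ⟨h1, h2⟩
    have h0 := h1 0 (by simp)
    rw [lev_zero] at h0
    refine ⟨h0, fun k hk => ?_, ?_⟩
    · have := h1 (k + 1) (by simpa using Nat.succ_lt_succ hk)
      rw [lev_cons_succ] at this
      omega
    · rw [List.length_cons, lev_cons_succ] at h2
      omega
  · rintro ⟨h0, h1, h2⟩
    refine ⟨fun k hk => ?_, ?_⟩
    · match k with
      | 0 => simpa using h0
      | k + 1 =>
        rw [lev_cons_succ]
        have := h1 k (by simpa using Nat.lt_of_succ_lt_succ hk)
        omega
    · rw [List.length_cons, lev_cons_succ]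
      omega

end Aux
section Aux2

open Function
open scoped ENNReal

variable {N : ℕ}

lemma fp_trunc_le (A : ℤ → Matrix (Fin N) (Fin N) ℝ)
    (hA : ∀ i : Fin N, ∑' p : ℤ × Fin N, ENNReal.ofReal (A p.1 i p.2) = 1) :
    ∀ (M : ℕ) (a : ℤ) (i : Fin N),
      (∑' l : List (ℤ × Fin N), if l.length ≤ M ∧ fpCond a l then ep A i l else 0) ≤ 1 := by
  intro M
  induction M with
  | zero =>
    intro a i
    rw [tsum_eq_single ([] : List (ℤ × Fin N)) ?_]
    · split <;> simp [ep]
    · intro l hl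
      apply if_neg
      rintro ⟨h1, -⟩
      exact hl (List.length_eq_zero_iff.mp (Nat.le_zero.mp h1))
  | succ M ih =>
    intro a i
    by_cases ha : a ≤ 0
    · rw [tsum_eq_single ([] : List (ℤ × Fin N)) ?_]
      · split <;> simp [ep]
      · intro l hl
        apply if_neg
        rintro ⟨-, hc⟩
        have := hc.1 0 (by simpa [List.length_pos_iff] using hl)
        rw [lev_zero] at this
        omega
    · push_neg at ha
      have key : (∑' l : List (ℤ × Fin N),
            if l.length ≤ M + 1 ∧ fpCond a l then ep A i l else 0)
          = ∑' q : (ℤ × Fin N) × List (ℤ × Fin N),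
            if q.2.length ≤ M ∧ fpCond a (q.1 :: q.2) then ep A i (q.1 :: q.2) else 0 := by
        refine tsum_eq_tsum_of_ne_zero_bij (fun x => x.1.1 :: x.1.2) ?_ ?_ ?_
        · intro x y h
          obtain ⟨h1, h2⟩ := List.cons_eq_cons.mp h
          exact Subtype.ext (Prod.ext h1 h2)
        · intro l hl
          rw [Function.mem_support] at hl
          match l with
          | [] =>
            exfalso
            apply hl
            apply if_neg
            rintro ⟨-, hc⟩
            have h2 := hc.2
            rw [List.length_nil, lev_nil] at h2
            omega
          | p :: t =>
            refine ⟨⟨(p, t), ?_⟩, rfl⟩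
            rw [Function.mem_support]
            simpa [List.length_cons, Nat.succ_le_succ_iff] using hl
        · rintro ⟨⟨p, t⟩, -⟩
          simp [List.length_cons, Nat.succ_le_succ_iff]
      rw [key, ENNReal.tsum_prod']
      have hbound : ∀ p : ℤ × Fin N,
          (∑' t : List (ℤ × Fin N),
              if t.length ≤ M ∧ fpCond a (p :: t) then ep A i (p :: t) else 0)
            ≤ ENNReal.ofReal (A p.1 i p.2) := by
        rintro ⟨m, j⟩
        have hrw : ∀ t : List (ℤ × Fin N),
            (if t.length ≤ M ∧ fpCond a ((m, j) :: t) then ep A i ((m, j) :: t) else 0)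
              = ENNReal.ofReal (A m i j)
                  * (if t.length ≤ M ∧ fpCond (a - m) t then ep A j t else 0) := by
          intro t
          by_cases h : t.length ≤ M ∧ fpCond (a - m) t
          · rw [if_pos ⟨h.1, fpCond_cons.mpr ⟨ha, h.2⟩⟩, if_pos h]
            rfl
          · rw [if_neg ?_, if_neg h, mul_zero]
            rintro ⟨h1, h2⟩
            exact h ⟨h1, (fpCond_cons.mp h2).2⟩
        calc (∑' t : List (ℤ × Fin N),
                if t.length ≤ M ∧ fpCond a ((m, j) :: t) then ep A i ((m, j) :: t) else 0)
            = ENNReal.ofReal (A m i j)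
                * ∑' t : List (ℤ × Fin N),
                    (if t.length ≤ M ∧ fpCond (a - m) t then ep A j t else 0) := by
              simp only [hrw, ENNReal.tsum_mul_left]
          _ ≤ ENNReal.ofReal (A m i j) * 1 := mul_le_mul_right (ih (a - m) j) _
          _ = ENNReal.ofReal (A m i j) := mul_one _
      calc (∑' p : ℤ × Fin N, ∑' t : List (ℤ × Fin N),
              if t.length ≤ M ∧ fpCond a (p :: t) then ep A i (p :: t) else 0)
          ≤ ∑' p : ℤ × Fin N, ENNReal.ofReal (A p.1 i p.2) := ENNReal.tsum_le_tsum hbound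
        _ = 1 := hA i

lemma fp_le_one (A : ℤ → Matrix (Fin N) (Fin N) ℝ)
    (hA : ∀ i : Fin N, ∑' p : ℤ × Fin N, ENNReal.ofReal (A p.1 i p.2) = 1)
    (a : ℤ) (i j : Fin N) : fp A a i j ≤ 1 := by
  rw [fp, ENNReal.tsum_eq_iSup_sum]
  refine iSup_le fun s => ?_
  set M := s.sup fun l : List (ℤ × Fin N) => l.length with hM
  calc (∑ l ∈ s, if fpCond a l ∧ endPhase i l = j then ep A i l else 0)
      ≤ ∑ l ∈ s, (if l.length ≤ M ∧ fpCond a l then ep A i l else 0) := by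
        refine Finset.sum_le_sum fun l hl => ?_
        by_cases h : fpCond a l ∧ endPhase i l = j
        · rw [if_pos h, if_pos ⟨Finset.le_sup hl, h.1⟩]
        · rw [if_neg h]
          exact zero_le
    _ ≤ ∑' l : List (ℤ × Fin N), (if l.length ≤ M ∧ fpCond a l then ep A i l else 0) :=
        ENNReal.sum_le_tsum s
    _ ≤ 1 := fp_trunc_le A hA M a i

end Aux2
section Aux3

open Function
open scoped ENNReal

variable {N : ℕ}

lemma fp_split (A : ℤ → Matrix (Fin N) (Fin N) ℝ) (hskip : ∀ m : ℤ, 1 < m → A m = 0)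
    {a : ℤ} (ha : 1 ≤ a) (i j : Fin N) :
    fp A a i j = ∑ m : Fin N, fp A 1 i m * fp A (a - 1) m j := by
  classical
  have hsupp : ∀ u1 u2 : List (ℤ × Fin N),
      (if fpCond 1 u1 ∧ fpCond (a - 1) u2 ∧ endPhase (endPhase i u1) u2 = j
        then ep A i u1 * ep A (endPhase i u1) u2 else 0) ≠ 0 →
      (fpCond 1 u1 ∧ fpCond (a - 1) u2 ∧ endPhase (endPhase i u1) u2 = j)
        ∧ ep A i u1 ≠ 0 ∧ ep A (endPhase i u1) u2 ≠ 0 := by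
    intro u1 u2 hx
    by_cases hc : fpCond 1 u1 ∧ fpCond (a - 1) u2 ∧ endPhase (endPhase i u1) u2 = j
    · rw [if_pos hc] at hx
      exact ⟨hc, mul_ne_zero_iff.mp hx⟩
    · rw [if_neg hc] at hx
      exact absurd rfl hx
  have hRHS : ∑ m : Fin N, fp A 1 i m * fp A (a - 1) m j
      = ∑' q : List (ℤ × Fin N) × List (ℤ × Fin N),
          (if fpCond 1 q.1 ∧ fpCond (a - 1) q.2 ∧ endPhase (endPhase i q.1) q.2 = j
            then ep A i q.1 * ep A (endPhase i q.1) q.2 else 0) := by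
    rw [ENNReal.tsum_prod']
    calc ∑ m : Fin N, fp A 1 i m * fp A (a - 1) m j
        = ∑ m : Fin N, ∑' l1 : List (ℤ × Fin N),
            (if fpCond 1 l1 ∧ endPhase i l1 = m then ep A i l1 else 0) * fp A (a - 1) m j := by
          simp only [fp, ENNReal.tsum_mul_right]
      _ = ∑' l1 : List (ℤ × Fin N), ∑ m : Fin N,
            (if fpCond 1 l1 ∧ endPhase i l1 = m then ep A i l1 else 0) * fp A (a - 1) m j :=
          (Summable.tsum_finsetSum fun _ _ => ENNReal.summable).symm
      _ = ∑' (l1 : List (ℤ × Fin N)) (l2 : List (ℤ × Fin N)),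
            (if fpCond 1 l1 ∧ fpCond (a - 1) l2 ∧ endPhase (endPhase i l1) l2 = j
              then ep A i l1 * ep A (endPhase i l1) l2 else 0) := by
          refine tsum_congr fun l1 => ?_
          by_cases h : fpCond 1 l1
          · have hstep : ∀ m : Fin N,
                (if fpCond 1 l1 ∧ endPhase i l1 = m then ep A i l1 else 0) * fp A (a - 1) m j
                  = (if endPhase i l1 = m then ep A i l1 * fp A (a - 1) m j else 0) := by
              intro m
              by_cases hm : endPhase i l1 = m
              · simp [h, hm]
              · simp [h, hm]
            rw [Finset.sum_congr rfl fun m _ => hstep m, Finset.sum_ite_eq, if_pos (Finset.mem_univ _)]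
            rw [fp, ← ENNReal.tsum_mul_left]
            refine tsum_congr fun l2 => ?_
            by_cases h2 : fpCond (a - 1) l2 ∧ endPhase (endPhase i l1) l2 = j
            · rw [if_pos h2, if_pos ⟨h, h2⟩]
            · rw [if_neg h2, mul_zero, if_neg (by rintro ⟨-, hh⟩; exact h2 hh)]
          · have : ∀ m : Fin N,
                (if fpCond 1 l1 ∧ endPhase i l1 = m then ep A i l1 else 0) * fp A (a - 1) m j = 0 := by
              intro m
              rw [if_neg (by rintro ⟨hh, -⟩; exact h hh), zero_mul]
            rw [Finset.sum_congr rfl fun m _ => this m, Finset.sum_const, smul_zero]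
            refine (ENNReal.summable.tsum_eq_zero_iff).mpr (fun l2 => ?_) |>.symm
            exact if_neg (by rintro ⟨hh, -⟩; exact h hh)
  rw [fp, hRHS]
  have key : ∀ p q : ↥(support fun q : List (ℤ × Fin N) × List (ℤ × Fin N) =>
      (if fpCond 1 q.1 ∧ fpCond (a - 1) q.2 ∧ endPhase (endPhase i q.1) q.2 = j
        then ep A i q.1 * ep A (endPhase i q.1) q.2 else 0)),
      p.1.1 ++ p.1.2 = q.1.1 ++ q.1.2 → p.1.1.length ≤ q.1.1.length := by
    intro p q hpq
    by_contra hlt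
    push_neg at hlt
    obtain ⟨⟨hc1p, -, -⟩, hep1p, -⟩ := hsupp p.1.1 p.1.2 p.2
    obtain ⟨⟨hc1q, -, -⟩, hep1q, -⟩ := hsupp q.1.1 q.1.2 q.2
    have hlt1 : lev 0 (p.1.1 ++ p.1.2) q.1.1.length < 1 := by
      rw [lev_append_le 0 (le_of_lt hlt)]
      exact hc1p.1 _ hlt
    have heq1 : lev 0 (q.1.1 ++ q.1.2) q.1.1.length = 1 := by
      rw [lev_append_le 0 le_rfl]
      exact fpCond_exact le_rfl (ep_step_le hskip hep1q) hc1q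
    rw [hpq, heq1] at hlt1
    omega
  refine tsum_eq_tsum_of_ne_zero_bij (fun x => x.1.1 ++ x.1.2) ?_ ?_ ?_
  · intro x y hxy
    have hlen : x.1.1.length = y.1.1.length := le_antisymm (key x y hxy) (key y x hxy.symm)
    obtain ⟨e1, e2⟩ := List.append_inj hxy hlen
    exact Subtype.ext (Prod.ext e1 e2)
  · intro l hl
    rw [mem_support] at hl
    have hcond : fpCond a l ∧ endPhase i l = j := by
      by_contra hcc
      rw [if_neg hcc] at hl
      exact hl rfl
    have hep : ep A i l ≠ 0 := by
      rw [if_pos hcond] at hl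
      exact hl
    have hstep := ep_step_le hskip hep
    obtain ⟨hc, hend⟩ := hcond
    have hex : ∃ k, 1 ≤ lev 0 l k := ⟨l.length, le_trans ha hc.2⟩
    have hT1 : 1 ≤ lev 0 l (Nat.find hex) := Nat.find_spec hex
    have hmin : ∀ k < Nat.find hex, lev 0 l k < 1 := fun k hk =>
      lt_of_not_ge (Nat.find_min hex hk)
    have hTlen : Nat.find hex ≤ l.length := Nat.find_min' hex (le_trans ha hc.2)
    have hTexact : lev 0 l (Nat.find hex) = 1 := by
      have h0 : Nat.find hex ≠ 0 := by
        intro h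
        rw [h, lev_zero] at hT1
        omega
      obtain ⟨t, ht⟩ := Nat.exists_eq_succ_of_ne_zero h0
      have hstept : lev 0 l (t + 1) ≤ lev 0 l t + 1 := lev_step_le hstep (by omega)
      have hltt := hmin t (by omega)
      rw [ht] at hT1 ⊢
      simp only [Nat.succ_eq_add_one] at hT1 ⊢
      omega
    set T := Nat.find hex with hTdef
    have hlen1 : (l.take T).length = T := by
      rw [List.length_take]
      omega
    have hsplit : l.take T ++ l.drop T = l := List.take_append_drop T l
    have hlev1 : ∀ k ≤ T, lev 0 (l.take T) k = lev 0 l k := fun k hk => lev_take 0 l hk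
    have hlev2 : ∀ k, lev 0 l (T + k) = 1 + lev 0 (l.drop T) k := by
      intro k
      have h := lev_append_add 0 (l.take T) (l.drop T) k
      rw [hsplit, hlen1, hlev1 T le_rfl, hTexact, lev_eq 1 (l.drop T) k] at h
      exact h
    have hlen2 : (l.drop T).length = l.length - T := List.length_drop
    have hgcond : fpCond 1 (l.take T) ∧ fpCond (a - 1) (l.drop T)
        ∧ endPhase (endPhase i (l.take T)) (l.drop T) = j := by
      refine ⟨⟨?_, ?_⟩, ⟨?_, ?_⟩, ?_⟩
      · intro k hk
        rw [hlen1] at hk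
        rw [hlev1 k (le_of_lt hk)]
        exact hmin k hk
      · rw [hlen1, hlev1 T le_rfl, hTexact]
      · intro k hk
        rw [hlen2] at hk
        have hTk : T + k < l.length := by omega
        have h := hc.1 (T + k) hTk
        have h2 := hlev2 k
        omega
      · have hTl : T + (l.drop T).length = l.length := by
          rw [hlen2]; omega
        have h2 := hlev2 (l.drop T).length
        rw [hTl] at h2
        have h3 := hc.2
        omega
      · rw [← endPhase_append, hsplit]
        exact hend
    refine ⟨⟨(l.take T, l.drop T), ?_⟩, hsplit⟩
    rw [mem_support]
    rw [if_pos hgcond, ← ep_append, hsplit]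
    exact hep
  · rintro ⟨⟨l1, l2⟩, hx⟩
    obtain ⟨⟨hc1, hc2, hend2⟩, hep1, hep2⟩ := hsupp l1 l2 hx
    have hexact1 : lev 0 l1 l1.length = 1 :=
      fpCond_exact le_rfl (ep_step_le hskip hep1) hc1
    have hcond : fpCond a (l1 ++ l2) ∧ endPhase i (l1 ++ l2) = j := by
      refine ⟨⟨?_, ?_⟩, ?_⟩
      · intro k hk
        rw [List.length_append] at hk
        rcases Nat.lt_or_ge k l1.length with h' | h'
        · rw [lev_append_le 0 (le_of_lt h')]
          have := hc1.1 k h'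
          omega
        · obtain ⟨k', rfl⟩ : ∃ k', k = l1.length + k' := ⟨k - l1.length, by omega⟩
          rw [lev_append_add, hexact1, lev_eq 1 l2 k']
          have := hc2.1 k' (by omega)
          omega
      · rw [List.length_append, lev_append_add, hexact1, lev_eq 1 l2 l2.length]
        have := hc2.2
        omega
      · rw [endPhase_append]
        exact hend2
    show (if fpCond a (l1 ++ l2) ∧ endPhase i (l1 ++ l2) = j then ep A i (l1 ++ l2) else 0) = _
    rw [if_pos hcond, if_pos ⟨hc1, hc2, hend2⟩, ep_append]

end Aux3
section Aux4

open Function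
open scoped ENNReal

variable {N : ℕ}

lemma fp_zero (A : ℤ → Matrix (Fin N) (Fin N) ℝ) (i j : Fin N) :
    fp A 0 i j = if i = j then 1 else 0 := by
  rw [fp, tsum_eq_single ([] : List (ℤ × Fin N)) ?_]
  · have hc : fpCond (0 : ℤ) ([] : List (ℤ × Fin N)) := by
      constructor
      · intro k hk
        simp at hk
      · simp
    by_cases h : i = j
    · rw [if_pos ⟨hc, h⟩, if_pos h]
      rfl
    · rw [if_neg (by rintro ⟨-, hh⟩; exact h hh), if_neg h]
  · intro l hl
    apply if_neg
    rintro ⟨hc, -⟩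
    have := hc.1 0 (by simpa [List.length_pos_iff] using hl)
    rw [lev_zero] at this
    omega

lemma fp_pow (A : ℤ → Matrix (Fin N) (Fin N) ℝ) (hskip : ∀ m : ℤ, 1 < m → A m = 0)
    (u : ℕ) (i j : Fin N) :
    fp A (u : ℤ) i j = ((Matrix.of fun i j => fp A 1 i j) ^ u) i j := by
  induction u generalizing i j with
  | zero =>
    simp only [Nat.cast_zero, pow_zero, Matrix.one_apply, fp_zero]
  | succ u ih =>
    have hc : ((u + 1 : ℕ) : ℤ) = (u : ℤ) + 1 := by push_cast; ring
    rw [hc, fp_split A hskip (by omega) i j]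
    have hm : ((u : ℤ) + 1 - 1) = (u : ℤ) := by ring
    rw [hm, pow_succ']
    rw [Matrix.mul_apply]
    refine Finset.sum_congr rfl fun m _ => ?_
    rw [ih m j]
    rfl

lemma pow_entry_ne_top {E : Matrix (Fin N) (Fin N) ℝ≥0∞} (hE : ∀ i j, E i j ≤ 1) :
    ∀ (u : ℕ) (i j : Fin N), (E ^ u) i j ≠ ∞ := by
  intro u
  induction u with
  | zero =>
    intro i j
    rw [pow_zero, Matrix.one_apply]
    split <;> simp
  | succ u ih =>
    intro i j
    rw [pow_succ, Matrix.mul_apply]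
    refine (ENNReal.sum_lt_top.mpr fun m _ => ?_).ne
    exact (ENNReal.mul_ne_top (ih i m) (ne_top_of_le_ne_top ENNReal.one_ne_top (hE m j))).lt_top

lemma passMat_entry {A : ℤ → Matrix (Fin N) (Fin N) ℝ} (hnn : ∀ m i j, 0 ≤ A m i j)
    (a : ℤ) (i j : Fin N) : passMat A 1 0 a i j = (fp A a i j).toReal := by
  rw [fp, ENNReal.tsum_toReal_eq (fun l => by
    split
    · exact ep_ne_top A i l
    · exact ENNReal.zero_ne_top)]
  show (∑' l : List (ℤ × Fin N),
      if (∀ k < l.length, lev 0 l k < a) ∧ a ≤ lev (0:ℤ) l l.length ∧ endPhase i l = j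
      then (1:ℝ) ^ l.length * pathProb A i l else 0) = _
  refine tsum_congr fun l => ?_
  by_cases h : fpCond a l ∧ endPhase i l = j
  · rw [if_pos ⟨h.1.1, h.1.2, h.2⟩, if_pos h, ep_toReal hnn, one_pow, one_mul]
  · rw [if_neg ?_, if_neg h, ENNReal.toReal_zero]
    rintro ⟨h1, h2, h3⟩
    exact h ⟨⟨h1, h2⟩, h3⟩

lemma passMat_pow_entry {A : ℤ → Matrix (Fin N) (Fin N) ℝ} (hnn : ∀ m i j, 0 ≤ A m i j)
    (hA : ∀ i : Fin N, ∑' p : ℤ × Fin N, ENNReal.ofReal (A p.1 i p.2) = 1)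
    (u : ℕ) (i j : Fin N) :
    ((passMat A 1 0 1) ^ u) i j = (((Matrix.of fun i j => fp A 1 i j) ^ u) i j).toReal := by
  have hE : ∀ i j : Fin N, (Matrix.of fun i j => fp A 1 i j) i j ≤ 1 := fun i j =>
    fp_le_one A hA 1 i j
  induction u generalizing i j with
  | zero =>
    rw [pow_zero, pow_zero, Matrix.one_apply, Matrix.one_apply]
    split <;> simp
  | succ u ih =>
    rw [pow_succ, pow_succ, Matrix.mul_apply, Matrix.mul_apply]
    rw [ENNReal.toReal_sum (fun m _ => ENNReal.mul_ne_top (pow_entry_ne_top hE u i m)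
      (ne_top_of_le_ne_top ENNReal.one_ne_top (hE m j)))]
    refine Finset.sum_congr rfl fun m _ => ?_
    rw [ih i m, ENNReal.toReal_mul, passMat_entry hnn 1 m j]
    rfl

end Aux4
section Aux5

open Function
open scoped ENNReal

variable {N : ℕ}

lemma Amat_skip (Λ : ℕ → Matrix (Fin N) (Fin N) ℝ) : ∀ m : ℤ, 1 < m → Amat Λ m = 0 :=
  fun _ hm => if_neg (by omega)

lemma Amat_nonneg {Λ : ℕ → Matrix (Fin N) (Fin N) ℝ} (hnn : ∀ m i j, 0 ≤ Λ m i j) :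
    ∀ (m : ℤ) (i j : Fin N), 0 ≤ Amat Λ m i j := by
  intro m i j
  rw [Amat]
  split
  · exact hnn _ i j
  · simp

lemma Amat_sub (Λ : ℕ → Matrix (Fin N) (Fin N) ℝ) (z : ℕ) :
    Amat Λ (1 - (z : ℤ)) = Λ z := by
  show (if (1 - (z : ℤ)) ≤ 1 then Λ ((1 : ℤ) - (1 - (z : ℤ))).toNat else 0) = Λ z
  rw [if_pos (by omega)]
  have h : (1 : ℤ) - (1 - (z : ℤ)) = z := by ring
  rw [h, Int.toNat_natCast]

lemma Amat_stoch {Λ : ℕ → Matrix (Fin N) (Fin N) ℝ} (hnn : ∀ m i j, 0 ≤ Λ m i j)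
    (hstoch : ∀ i, HasSum (fun p : ℕ × Fin N => Λ p.1 i p.2) 1) :
    ∀ i : Fin N, ∑' p : ℤ × Fin N, ENNReal.ofReal (Amat Λ p.1 i p.2) = 1 := by
  intro i
  have hbij : ∑' p : ℤ × Fin N, ENNReal.ofReal (Amat Λ p.1 i p.2)
      = ∑' q : ℕ × Fin N, ENNReal.ofReal (Λ q.1 i q.2) := by
    refine tsum_eq_tsum_of_ne_zero_bij (fun x => ((1 - (x.1.1 : ℤ)), x.1.2)) ?_ ?_ ?_
    · intro x y h
      have h' : ((1 : ℤ) - (x.1.1 : ℤ), x.1.2) = ((1 : ℤ) - (y.1.1 : ℤ), y.1.2) := h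
      obtain ⟨h1, h2⟩ := Prod.ext_iff.mp h'
      exact Subtype.ext (Prod.ext (by omega) h2)
    · rintro ⟨m, j2⟩ hp
      rw [mem_support] at hp
      have hm : m ≤ 1 := by
        by_contra hh
        push_neg at hh
        rw [Amat_skip Λ m hh] at hp
        simp at hp
      refine ⟨⟨((1 - m).toNat, j2), ?_⟩, ?_⟩
      · rw [mem_support]
        have he : Amat Λ m = Λ (1 - m).toNat := if_pos hm
        rw [he] at hp
        exact hp
      · show ((1 : ℤ) - ((1 - m).toNat : ℤ), j2) = (m, j2)
        have ht : ((1 - m).toNat : ℤ) = 1 - m := Int.toNat_of_nonneg (by omega)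
        exact Prod.ext (by omega) rfl
    · rintro ⟨⟨z, j2⟩, -⟩
      show ENNReal.ofReal (Amat Λ (1 - (z : ℤ)) i j2) = ENNReal.ofReal (Λ z i j2)
      rw [Amat_sub]
  rw [hbij, ← ENNReal.ofReal_tsum_of_nonneg (f := fun q : ℕ × Fin N => Λ q.1 i q.2) (fun q => hnn q.1 i q.2) (hstoch i).summable,
    (hstoch i).tsum_eq, ENNReal.ofReal_one]

lemma ep_phi (Λ : ℕ → Matrix (Fin N) (Fin N) ℝ) (i : Fin N) (l : List (ℕ × Fin N)) :
    ep (Amat Λ) i (l.map fun p => ((1 : ℤ) - p.1, p.2)) = ec Λ i l := by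
  induction l generalizing i with
  | nil => simp [ep, ec]
  | cons p rest ih =>
    obtain ⟨z, j2⟩ := p
    show ENNReal.ofReal (Amat Λ (1 - (z : ℤ)) i j2) * _ = _
    rw [Amat_sub, ih j2]
    rfl

lemma endPhase_phi (i : Fin N) (l : List (ℕ × Fin N)) :
    endPhase i (l.map fun p => ((1 : ℤ) - p.1, p.2)) = cEndPhase i l := by
  simp [endPhase, cEndPhase, List.foldl_map]

lemma sum_map_one_sub (t : List (ℕ × Fin N)) :
    ((t.map fun p => ((1 : ℤ) - p.1)).sum) = t.length - (t.map fun p => ((p.1 : ℤ))).sum := by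
  induction t with
  | nil => simp
  | cons p rest ih =>
    simp [ih]
    ring

lemma dlev_phi (u : ℤ) (l : List (ℕ × Fin N)) {k : ℕ} (hk : k ≤ l.length) :
    dlev u l k = u - lev 0 (l.map fun p => ((1 : ℤ) - p.1, p.2)) k := by
  have h1 : ((l.map fun p => ((1 : ℤ) - p.1, p.2)).take k)
      = (l.take k).map fun p => ((1 : ℤ) - p.1, p.2) := List.map_take.symm
  rw [lev, h1]
  have h2 : (((l.take k).map fun p => ((1 : ℤ) - p.1, p.2)).map Prod.fst)
      = (l.take k).map fun p => ((1 : ℤ) - p.1) := by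
    rw [List.map_map]
    rfl
  rw [h2, sum_map_one_sub, dlev]
  have h3 : (l.take k).length = k := by
    rw [List.length_take]
    omega
  rw [h3]
  ring

lemma dualRuin_entry {Λ : ℕ → Matrix (Fin N) (Fin N) ℝ} (hnn : ∀ m i j, 0 ≤ Λ m i j)
    (u : ℤ) (i j : Fin N) :
    dualRuin Λ u i j = (fp (Amat Λ) u i j).toReal := by
  have key : ∀ l : List (ℕ × Fin N),
      (if fpCond u (l.map fun p => ((1 : ℤ) - p.1, p.2))
          ∧ endPhase i (l.map fun p => ((1 : ℤ) - p.1, p.2)) = j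
        then ep (Amat Λ) i (l.map fun p => ((1 : ℤ) - p.1, p.2)) else 0)
      = (if (∀ k < l.length, 0 < dlev u l k) ∧ dlev u l l.length ≤ 0 ∧ cEndPhase i l = j
        then ec Λ i l else 0) := by
    intro l
    have hiff : (fpCond u (l.map fun p => ((1 : ℤ) - p.1, p.2))
          ∧ endPhase i (l.map fun p => ((1 : ℤ) - p.1, p.2)) = j)
        ↔ ((∀ k < l.length, 0 < dlev u l k) ∧ dlev u l l.length ≤ 0 ∧ cEndPhase i l = j) := by
      rw [endPhase_phi]
      constructor
      · rintro ⟨⟨hf1, hf2⟩, hf3⟩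
        rw [List.length_map] at hf1 hf2
        refine ⟨fun k hk => ?_, ?_, hf3⟩
        · have := hf1 k hk
          rw [dlev_phi u l (le_of_lt hk)]
          omega
        · rw [dlev_phi u l le_rfl]
          omega
      · rintro ⟨hd1, hd2, hd3⟩
        refine ⟨⟨?_, ?_⟩, hd3⟩
        · intro k hk
          rw [List.length_map] at hk
          have := hd1 k hk
          rw [dlev_phi u l (le_of_lt hk)] at this
          omega
        · rw [List.length_map]
          rw [dlev_phi u l le_rfl] at hd2
          omega
    by_cases h : (∀ k < l.length, 0 < dlev u l k) ∧ dlev u l l.length ≤ 0 ∧ cEndPhase i l = j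
    · rw [if_pos (hiff.mpr h), if_pos h, ep_phi]
    · rw [if_neg (fun hh => h (hiff.mp hh)), if_neg h]
  have hE : fp (Amat Λ) u i j
      = ∑' l : List (ℕ × Fin N),
          (if (∀ k < l.length, 0 < dlev u l k) ∧ dlev u l l.length ≤ 0 ∧ cEndPhase i l = j
            then ec Λ i l else 0) := by
    rw [fp]
    refine tsum_eq_tsum_of_ne_zero_bij
      (fun x => x.1.map fun p => ((1 : ℤ) - p.1, p.2)) ?_ ?_ ?_
    · intro x y h
      have hinj : Injective fun p : ℕ × Fin N => ((1 : ℤ) - p.1, p.2) := by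
        intro p q hpq
        have h' : ((1 : ℤ) - (p.1 : ℤ), p.2) = ((1 : ℤ) - (q.1 : ℤ), q.2) := hpq
        obtain ⟨h1, h2⟩ := Prod.ext_iff.mp h'
        exact Prod.ext (by omega) h2
      exact Subtype.ext (List.map_injective_iff.mpr hinj h)
    · intro l' hl'
      rw [mem_support] at hl'
      have hcond : fpCond u l' ∧ endPhase i l' = j := by
        by_contra hcc
        rw [if_neg hcc] at hl'
        exact hl' rfl
      have hep : ep (Amat Λ) i l' ≠ 0 := by
        rw [if_pos hcond] at hl'
        exact hl'
      have hstep := ep_step_le (Amat_skip Λ) hep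
      refine ⟨⟨l'.map fun p => ((1 - p.1).toNat, p.2), ?_⟩, ?_⟩
      · rw [mem_support, ← key]
        have hphi : ((l'.map fun p => ((1 - p.1).toNat, p.2)).map
            fun p => ((1 : ℤ) - p.1, p.2)) = l' := by
          rw [List.map_map]
          refine Eq.trans (List.map_congr_left fun p hp => ?_) (List.map_id l')
          have hle := hstep p hp
          show ((1 : ℤ) - ((1 - p.1).toNat : ℤ), p.2) = p
          have ht : ((1 - p.1).toNat : ℤ) = 1 - p.1 := Int.toNat_of_nonneg (by omega)
          rw [ht]
          exact Prod.ext (by omega) rfl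
        rw [hphi]
        exact hl'
      · show ((l'.map fun p => ((1 - p.1).toNat, p.2)).map
            fun p => ((1 : ℤ) - p.1, p.2)) = l'
        rw [List.map_map]
        refine Eq.trans (List.map_congr_left fun p hp => ?_) (List.map_id l')
        have hle := hstep p hp
        show ((1 : ℤ) - ((1 - p.1).toNat : ℤ), p.2) = p
        have ht : ((1 - p.1).toNat : ℤ) = 1 - p.1 := Int.toNat_of_nonneg (by omega)
        rw [ht]
        exact Prod.ext (by omega) rfl
    · rintro ⟨l, -⟩
      exact key l
  show (∑' l : List (ℕ × Fin N),
      if (∀ k < l.length, 0 < dlev u l k) ∧ dlev u l l.length ≤ 0 ∧ cEndPhase i l = j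
      then claimProb Λ i l else 0) = _
  rw [hE, ENNReal.tsum_toReal_eq (fun l => by
    split
    · exact ec_ne_top Λ i l
    · exact ENNReal.zero_ne_top)]
  refine tsum_congr fun l => ?_
  split
  · rw [ec_toReal hnn]
  · rw [ENNReal.toReal_zero]

end Aux5
/-- The ruin probability matrix of the dual risk process with initial capital
`u` equals `G^u` where `G = G_1` is the first-passage phase-transition matrix of the
associated spectrally negative MAC; hence `ψ̂(u) = αᵀ G^u e`. -/
theorem dual_ruin_probability (N : ℕ) (Λ : ℕ → Matrix (Fin N) (Fin N) ℝ)
    (hnn : ∀ m i j, 0 ≤ Λ m i j)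
    (hstoch : ∀ i, HasSum (fun p : ℕ × Fin N => Λ p.1 i p.2) 1)
    (u : ℕ)
    (α : Fin N → ℝ) (hα : ∀ i, 0 ≤ α i) (hαsum : ∑ i, α i = 1) :
    dualRuin Λ (u : ℤ) = (passMat (Amat Λ) 1 0 1) ^ u ∧
      ∑ i, ∑ j, α i * dualRuin Λ (u : ℤ) i j
        = α ⬝ᵥ ((passMat (Amat Λ) 1 0 1) ^ u) *ᵥ (fun _ => (1 : ℝ)) := by
  have hnnA : ∀ (m : ℤ) (i j : Fin N), 0 ≤ Amat Λ m i j := Amat_nonneg hnn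
  have hA := Amat_stoch hnn hstoch
  have h1 : dualRuin Λ (u : ℤ) = (passMat (Amat Λ) 1 0 1) ^ u := by
    ext i j
    rw [dualRuin_entry hnn (u : ℤ) i j, fp_pow (Amat Λ) (Amat_skip Λ) u i j,
      passMat_pow_entry hnnA hA u i j]
  refine ⟨h1, ?_⟩
  rw [h1]
  simp [dotProduct, Matrix.mulVec, Finset.mul_sum]
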